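/- For every natural number n, the polynomial C_n satisfies the differential identity d/dz[(1-z^2) dC_n(z)/dz] + n(n+1) C_n(z) = 2(z-1) dB_n(z)/dz + B_n(z) - 2(2n+1) R_n(z) for all real z. -/

import Mathlib

/-- The `N`-th harmonic number `H_N = ∑_{k=1}^N 1/k` (with `H_0 = 0`). -/
noncomputable def H (N : ℕ) : ℝ := ∑ k ∈ Finset.Icc 1 N, (1 : ℝ) / k

/-- The Legendre polynomial of degree `n`,
`P_n(z) = 2^{-n} ∑_{k=0}^{n} (binom(n,k))² (z-1)^{n-k} (z+1)^k`, as a function on `ℝ`. -/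
noncomputable def P (n : ℕ) (z : ℝ) : ℝ :=
  (∑ k ∈ Finset.range (n + 1), ((n.choose k : ℝ)) ^ 2 * (z - 1) ^ (n - k) * (z + 1) ^ k) / 2 ^ n

/-- `R_n(z) = 2(H_{2n} - H_n) P_n(z)
               + 2 ∑_{k=0}^{n-1} (-1)^{n+k} (2k+1)/((n-k)(n+k+1)) P_k(z)`. -/
noncomputable def R (n : ℕ) (z : ℝ) : ℝ :=
  2 * (H (2 * n) - H n) * P n z +
    2 * ∑ k ∈ Finset.range n,
      (-1 : ℝ) ^ (n + k) * (2 * (k : ℝ) + 1) / (((n : ℝ) - k) * ((n : ℝ) + k + 1)) * P k z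

/-- `B_n(z) = 4(H_{2n} - H_n) P_n(z) + 4 ∑_{k=0}^{n-1} (2k+1)/((n-k)(n+k+1)) P_k(z)`. -/
noncomputable def B (n : ℕ) (z : ℝ) : ℝ :=
  4 * (H (2 * n) - H n) * P n z +
    4 * ∑ k ∈ Finset.range n,
      (2 * (k : ℝ) + 1) / (((n : ℝ) - k) * ((n : ℝ) + k + 1)) * P k z

/-- The coefficient `c_{nk}` for `0 ≤ k ≤ n-1`. -/
noncomputable def c (n k : ℕ) : ℝ :=
  (-1 : ℝ) ^ (n + k) * (8 * (2 * (k : ℝ) + 1) / (((n : ℝ) - k) * ((n : ℝ) + k + 1))) *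
      (H (n + k) - H (n - k) - H ((n + k) / 2) + H ((n - k) / 2))
    - 4 * (2 * (k : ℝ) + 1) ^ 2 / (((n : ℝ) - k) ^ 2 * ((n : ℝ) + k + 1) ^ 2)
    - (-1 : ℝ) ^ (n + k) * (4 * (2 * (n : ℝ) + 1) * (2 * (k : ℝ) + 1)) /
        (((n : ℝ) - k) ^ 2 * ((n : ℝ) + k + 1) ^ 2)

/-- The diagonal coefficient
`c_{nn} = 4(H_{2n}-H_n)² - 4 ∑_{k=1}^{2n} 1/k² + 2 ∑_{k=1}^{n} 1/k²`. -/
noncomputable def cnn (n : ℕ) : ℝ :=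
  4 * (H (2 * n) - H n) ^ 2
    - 4 * (∑ k ∈ Finset.Icc 1 (2 * n), (1 : ℝ) / (k : ℝ) ^ 2)
    + 2 * (∑ k ∈ Finset.Icc 1 n, (1 : ℝ) / (k : ℝ) ^ 2)

/-- `C_n(z) = ∑_{k=0}^{n} c_{nk} P_k(z)` (with `c_{nn}` given by `cnn`). -/
noncomputable def C (n : ℕ) (z : ℝ) : ℝ :=
  (∑ k ∈ Finset.range n, c n k * P k z) + cnn n * P n z

/-!
Every function in the identity is a finite combination of Legendre polynomials, so it suffices to
compare coefficients of each `P_j`. Legendre's equation says that `p ↦ ((1 - X²) p')' + n(n+1) p`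
multiplies `P_k` by `n(n+1) - k(k+1)`, and the relation
`(X - 1)(P_{k+1}' + P_k') = (k+1)(P_{k+1} - P_k)` gives by induction
`2(X - 1) P_k' + P_k = (2k+1) P_k + 2 ∑_{j<k} (-1)^{k+j} (2j+1) P_j`. Both facts are checked in
the basis `(X - 1)^{m-j} (X + 1)^j` of the defining formula, where multiplication by `X ± 1` and
differentiation just shift coefficients.

After this the coefficient of `P_j` on the right involves the alternating tail sum
`∑_{j ≤ k < n} (-1)^{n+k} (2k+1)/((n-k)(n+k+1))`, which equals
`H_{n+j} - H_{n-j} - H_{⌊(n+j)/2⌋} + H_{⌊(n-j)/2⌋} - (H_{2n} - H_n)` by downward induction on `j`;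
this is exactly the harmonic expression in `c_{nj}`.
-/

open Polynomial Finset

section HomForm

variable {R : Type*} [CommRing R]

noncomputable def homForm (f : ℕ → R) (m : ℕ) : R[X] :=
  ∑ j ∈ range (m + 1), C (f j) * (X - 1) ^ (m - j) * (X + 1) ^ j

def shiftRight (f : ℕ → R) : ℕ → R
  | 0 => 0
  | j + 1 => f j

lemma homForm_congr {f g : ℕ → R} {m : ℕ} (h : ∀ j ≤ m, f j = g j) :
    homForm f m = homForm g m :=
  sum_congr rfl fun j hj => by rw [h j (Nat.lt_succ_iff.mp (mem_range.mp hj))]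

lemma homForm_add (f g : ℕ → R) (m : ℕ) :
    homForm f m + homForm g m = homForm (f + g) m := by
  simp only [homForm, ← sum_add_distrib, Pi.add_apply, C_add, add_mul]

lemma homForm_sub (f g : ℕ → R) (m : ℕ) :
    homForm f m - homForm g m = homForm (f - g) m := by
  simp only [homForm, ← sum_sub_distrib, Pi.sub_apply, C_sub, sub_mul]

lemma C_mul_homForm (a : R) (f : ℕ → R) (m : ℕ) :
    C a * homForm f m = homForm (fun j => a * f j) m := by
  simp only [homForm, mul_sum, C_mul, mul_assoc]

lemma X_add_one_mul_homForm (f : ℕ → R) (m : ℕ) :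
    (X + 1) * homForm f m = homForm (shiftRight f) (m + 1) := by
  rw [homForm, homForm, mul_sum]
  conv_rhs => rw [sum_range_succ']
  simp only [shiftRight, C_0, zero_mul, add_zero, Nat.add_sub_add_right]
  exact sum_congr rfl fun j _ => by ring

lemma X_sub_one_mul_homForm {f : ℕ → R} {m : ℕ} (hf : f (m + 1) = 0) :
    (X - 1) * homForm f m = homForm f (m + 1) := by
  rw [homForm, homForm, mul_sum, sum_range_succ _ (m + 1), hf, C_0, zero_mul, zero_mul, add_zero]
  refine sum_congr rfl fun j hj => ?_
  rw [show m + 1 - j = m - j + 1 by have := mem_range.mp hj; omega]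
  ring

lemma two_mul_homForm {f : ℕ → R} {m : ℕ} (hf : f (m + 1) = 0) :
    2 * homForm f m = homForm (shiftRight f - f) (m + 1) := by
  rw [show (2 : R[X]) = (X + 1) - (X - 1) by ring, sub_mul, X_add_one_mul_homForm,
    X_sub_one_mul_homForm hf, homForm_sub]

lemma derivative_homForm (f : ℕ → R) (m : ℕ) :
    derivative (homForm f (m + 1)) =
      homForm (fun j => ((m : R) + 1 - j) * f j + ((j : R) + 1) * f (j + 1)) m := by
  have hterm : ∀ j ∈ range (m + 2), derivative (C (f j) * (X - 1) ^ (m + 1 - j) * (X + 1) ^ j) =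
      C (f j * (m + 1 - j : ℕ)) * (X - 1) ^ (m - j) * (X + 1) ^ j +
        C (f j * j) * (X - 1) ^ (m + 1 - j) * (X + 1) ^ (j - 1) := by
    intro j _
    rw [mul_assoc, derivative_C_mul, derivative_mul, derivative_pow, derivative_pow,
      show m + 1 - j - 1 = m - j by omega]
    simp only [derivative_sub, derivative_add, derivative_X, derivative_one, sub_zero, add_zero,
      mul_one, C_mul]
    ring
  rw [homForm, map_sum, sum_congr rfl hterm, sum_add_distrib, sum_range_succ _ (m + 1),
    sum_range_succ' (fun j => C (f j * j) * _ * _), homForm]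
  simp only [Nat.sub_self, Nat.cast_zero, mul_zero, C_0, zero_mul, add_zero,
    Nat.add_sub_add_right, Nat.add_sub_cancel, ← sum_add_distrib]
  refine sum_congr rfl fun j hj => ?_
  rw [Nat.cast_sub (by have := mem_range.mp hj; omega)]
  simp only [C_add, C_mul, Nat.cast_add, Nat.cast_one, map_natCast]
  ring

end HomForm

section ScaledLegendre

variable {R : Type*} [CommRing R]

lemma succ_mul_choose_succ_eq (n j : ℕ) :
    ((j : R) + 1) * n.choose (j + 1) = ((n : R) - j) * n.choose j := by
  rcases lt_or_ge j n with h | h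
  · have := congrArg (Nat.cast (R := R)) (Nat.choose_succ_right_eq n j)
    push_cast [Nat.cast_sub h.le] at this
    linear_combination this
  · rw [Nat.choose_eq_zero_of_lt (Nat.lt_succ_of_le h)]
    rcases h.eq_or_lt with rfl | h
    · simp
    · simp [Nat.choose_eq_zero_of_lt h]

noncomputable def scaledLegendre (n : ℕ) : R[X] :=
  homForm (fun j => (n.choose j : R) ^ 2) n

lemma scaledLegendre_zero : (scaledLegendre 0 : R[X]) = 1 := by
  simp [scaledLegendre, homForm]

lemma scaledLegendre_one : (scaledLegendre 1 : R[X]) = 2 * X := by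
  rw [scaledLegendre, homForm, sum_range_succ, sum_range_one]
  simp only [Nat.choose_zero_right, Nat.choose_self, Nat.cast_one, one_pow, C_1, pow_zero, pow_one]
  ring

lemma derivative_one_sub_X_sq_mul_derivative_scaledLegendre (n : ℕ) :
    derivative ((1 - X ^ 2) * derivative (scaledLegendre n : R[X])) +
      C ((n : R) * (n + 1)) * scaledLegendre n = 0 := by
  rcases n with _ | m
  · simp [scaledLegendre_zero]
  set f : ℕ → R := fun j => ((m + 1).choose j : R) ^ 2 with hf
  set b : ℕ → R := fun j => ((m : R) + 1 - j) * f j + ((j : R) + 1) * f (j + 1) with hb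
  have hb_top : b (m + 1) = 0 := by simp [hb, hf]
  have hflux : (1 - X ^ 2) * derivative (scaledLegendre (m + 1) : R[X]) =
      -homForm (shiftRight b) (m + 2) := by
    rw [scaledLegendre, derivative_homForm, ← X_sub_one_mul_homForm (f := shiftRight b)
      (by simpa [shiftRight] using hb_top), ← X_add_one_mul_homForm]
    ring
  rw [hflux, derivative_neg, derivative_homForm, scaledLegendre, C_mul_homForm, neg_add_eq_zero]
  refine homForm_congr fun j _ => ?_
  rcases j with _ | i
  · simp only [shiftRight, hb, hf, zero_add, Nat.choose_zero_right, Nat.choose_one_right]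
    push_cast
    ring
  · have r1 := succ_mul_choose_succ_eq (R := R) (m + 1) i
    have r2 := succ_mul_choose_succ_eq (R := R) (m + 1) (i + 1)
    simp only [shiftRight, hb, hf]
    push_cast at r1 r2 ⊢
    -- each relation `l = r` enters squared, as `l² - r² = (l + r) (l - r)`
    linear_combination
      -((i + 1 : R) * (m + 1).choose (i + 1) + ((m : R) + 1 - i) * (m + 1).choose i) * r1 +
        ((i + 2 : R) * (m + 1).choose (i + 2) + ((m : R) - i) * (m + 1).choose (i + 1)) * r2

lemma X_sub_one_mul_derivative_scaledLegendre_succ_add (m : ℕ) :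
    (X - 1) * (derivative (scaledLegendre (m + 1) : R[X]) + 2 * derivative (scaledLegendre m)) =
      C ((m : R) + 1) * (scaledLegendre (m + 1) - 2 * scaledLegendre m) := by
  rcases m with _ | t
  · rw [zero_add, scaledLegendre_one, scaledLegendre_zero, derivative_mul, derivative_X,
      derivative_ofNat, derivative_one, Nat.cast_zero, zero_add, map_one]
    ring
  set m := t + 1
  set fn : ℕ → R := fun j => ((m + 1).choose j : R) ^ 2 with hfn
  set fm : ℕ → R := fun j => (m.choose j : R) ^ 2 with hfm
  set b : ℕ → R := fun j => ((m : R) + 1 - j) * fn j + ((j : R) + 1) * fn (j + 1) with hb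
  set d : ℕ → R := fun j => ((t : R) + 1 - j) * fm j + ((j : R) + 1) * fm (j + 1) with hd
  have hd_top : d (t + 1) = 0 := by simp [hd, hfm, m]
  have hfm_top : fm (m + 1) = 0 := by simp [hfm]
  have hsum_top : (b + (shiftRight d - d)) (m + 1) = 0 := by
    simp [hb, hd, hfn, hfm, shiftRight, m, Nat.choose_eq_zero_of_lt]
  have hL : (X - 1) *
      (derivative (scaledLegendre (m + 1) : R[X]) + 2 * derivative (scaledLegendre m)) =
        homForm (b + (shiftRight d - d)) (m + 1) := by
    rw [scaledLegendre, scaledLegendre, derivative_homForm, derivative_homForm,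
      two_mul_homForm hd_top, homForm_add, X_sub_one_mul_homForm hsum_top]
  have hR : C ((m : R) + 1) * (scaledLegendre (m + 1) - 2 * scaledLegendre m) =
      homForm (fun j => ((m : R) + 1) * (fn - (shiftRight fm - fm)) j) (m + 1) := by
    rw [scaledLegendre, scaledLegendre, two_mul_homForm hfm_top, homForm_sub, C_mul_homForm]
  rw [hL, hR]
  refine homForm_congr fun j _ => ?_
  rcases j with _ | i
  · simp only [shiftRight, hb, hd, hfn, hfm, Pi.add_apply, Pi.sub_apply, zero_add,
      Nat.choose_zero_right, Nat.choose_one_right]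
    push_cast [m]
    ring
  · have r1 := succ_mul_choose_succ_eq (R := R) m i
    have r2 := succ_mul_choose_succ_eq (R := R) m (i + 1)
    have hmt : (m : R) = t + 1 := by simp [m]
    simp only [shiftRight, hb, hd, hfn, hfm, Pi.add_apply, Pi.sub_apply]
    rw [Nat.choose_succ_succ m i, Nat.choose_succ_succ m (i + 1), hmt]
    rw [hmt] at r1 r2
    push_cast at r1 r2 ⊢
    linear_combination (-2 * (m.choose i : R)) * r1 + (2 * (m.choose (i + 1) : R)) * r2

end ScaledLegendre

section Legendre

variable {K : Type*} [Field K]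

noncomputable def legendre (n : ℕ) : K[X] :=
  C ((2 ^ n)⁻¹) * scaledLegendre n

lemma eval_legendre (n : ℕ) (z : ℝ) : (legendre n).eval z = P n z := by
  simp [legendre, scaledLegendre, homForm, P, eval_finsetSum, div_eq_inv_mul]

lemma legendre_zero : (legendre 0 : K[X]) = 1 := by
  simp [legendre, scaledLegendre_zero]

lemma derivative_one_sub_X_sq_mul_derivative_legendre (n : ℕ) :
    derivative ((1 - X ^ 2) * derivative (legendre n : K[X])) +
      C ((n : K) * (n + 1)) * legendre n = 0 := by
  rw [legendre, derivative_C_mul, mul_left_comm, derivative_C_mul, mul_left_comm, ← mul_add,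
    derivative_one_sub_X_sq_mul_derivative_scaledLegendre, mul_zero]

variable [NeZero (2 : K)]

lemma X_sub_one_mul_derivative_legendre_succ_add (m : ℕ) :
    (X - 1) * (derivative (legendre (m + 1) : K[X]) + derivative (legendre m)) =
      C ((m : K) + 1) * (legendre (m + 1) - legendre m) := by
  have hm : (legendre m : K[X]) = C ((2 ^ (m + 1))⁻¹) * (2 * scaledLegendre m) := by
    rw [legendre, ← mul_assoc, ← C_ofNat, ← C_mul, pow_succ, mul_inv, inv_mul_cancel_right₀
      (NeZero.ne 2)]
  rw [hm, legendre, derivative_C_mul, derivative_C_mul, derivative_mul, derivative_ofNat]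
  linear_combination
    C ((2 ^ (m + 1))⁻¹ : K) * X_sub_one_mul_derivative_scaledLegendre_succ_add (R := K) m

lemma two_mul_X_sub_one_mul_derivative_legendre_add_legendre (k : ℕ) :
    2 * (X - 1) * derivative (legendre k : K[X]) + legendre k =
      C (2 * (k : K) + 1) * legendre k +
        2 * ∑ j ∈ range k, C ((-1) ^ (k + j) * (2 * (j : K) + 1)) * legendre j := by
  induction k with
  | zero => simp [legendre_zero]
  | succ k ih =>
    have hsign : ∑ j ∈ range (k + 1), C ((-1) ^ (k + 1 + j) * (2 * (j : K) + 1)) * legendre j =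
        -(C (2 * (k : K) + 1) * legendre k) -
          ∑ j ∈ range k, C ((-1) ^ (k + j) * (2 * (j : K) + 1)) * legendre j := by
      simp only [add_right_comm k 1, pow_succ, mul_neg_one, neg_mul, map_neg, sum_neg_distrib,
        sum_range_succ, Even.neg_one_pow ⟨k, rfl⟩, one_mul]
      ring
    have hstep := X_sub_one_mul_derivative_legendre_succ_add (K := K) k
    rw [hsign]
    push_cast
    simp only [map_add, map_mul, map_natCast, map_one, map_ofNat] at hstep ih ⊢
    linear_combination 2 * hstep - ih

end Legendre

section LegendreSeries

variable {K : Type*} [Field K]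

noncomputable def legendreSeries (a : ℕ → K) (N : ℕ) : K[X] :=
  ∑ k ∈ range N, C (a k) * legendre k

lemma eval_legendreSeries (a : ℕ → ℝ) (N : ℕ) (z : ℝ) :
    (legendreSeries a N).eval z = ∑ k ∈ range N, a k * P k z := by
  simp [legendreSeries, eval_finsetSum, eval_legendre]

lemma legendreSeries_congr {a b : ℕ → K} {N : ℕ} (h : ∀ k < N, a k = b k) :
    legendreSeries a N = legendreSeries b N :=
  sum_congr rfl fun k hk => by rw [h k (mem_range.mp hk)]

lemma legendreSeries_sub (a b : ℕ → K) (N : ℕ) :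
    legendreSeries a N - legendreSeries b N = legendreSeries (a - b) N := by
  simp only [legendreSeries, ← sum_sub_distrib, Pi.sub_apply, C_sub, sub_mul]

lemma C_mul_legendreSeries (c : K) (a : ℕ → K) (N : ℕ) :
    C c * legendreSeries a N = legendreSeries (fun k => c * a k) N := by
  simp only [legendreSeries, mul_sum, C_mul, mul_assoc]

lemma derivative_one_sub_X_sq_mul_derivative_legendreSeries_add (ν : K) (a : ℕ → K) (N : ℕ) :
    derivative ((1 - X ^ 2) * derivative (legendreSeries a N)) + C ν * legendreSeries a N =
      legendreSeries (fun k => (ν - k * (k + 1)) * a k) N := by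
  simp only [legendreSeries, map_sum, mul_sum, ← sum_add_distrib]
  refine sum_congr rfl fun k _ => ?_
  rw [derivative_C_mul, mul_left_comm, derivative_C_mul, C_mul, C_sub]
  linear_combination C (a k) * derivative_one_sub_X_sq_mul_derivative_legendre (K := K) k

lemma two_mul_X_sub_one_mul_derivative_legendreSeries_add [NeZero (2 : K)] (a : ℕ → K)
    (N : ℕ) :
    2 * (X - 1) * derivative (legendreSeries a N) + legendreSeries a N =
      legendreSeries
        (fun j => (2 * j + 1) * (a j + 2 * ∑ k ∈ Ioo j N, (-1) ^ (k + j) * a k)) N := by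
  have hterm : ∀ k, 2 * (X - 1) * derivative (C (a k) * legendre k) + C (a k) * legendre k =
      C (a k * (2 * k + 1)) * legendre k +
        ∑ j ∈ range k, C (2 * a k * ((-1) ^ (k + j) * (2 * j + 1))) * legendre j := by
    intro k
    calc 2 * (X - 1) * derivative (C (a k) * legendre k) + C (a k) * legendre k
        = C (a k) * (2 * (X - 1) * derivative (legendre k) + legendre k) := by
          rw [derivative_C_mul]; ring
      _ = _ := by
          rw [two_mul_X_sub_one_mul_derivative_legendre_add_legendre, mul_add, ← mul_assoc,
            ← C_mul, ← mul_assoc, mul_sum]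
          exact congrArg _ (sum_congr rfl fun j _ => by simp only [C_mul, C_ofNat]; ring)
  simp only [legendreSeries, map_sum, mul_sum, ← sum_add_distrib, hterm]
  rw [sum_add_distrib, sum_comm' (t' := range N) (s' := fun j => Ioo j N)
    (by intro k j; simp only [mem_range, mem_Ioo]; omega), ← sum_add_distrib]
  refine sum_congr rfl fun j _ => ?_
  rw [← sum_mul, ← add_mul, ← map_sum, ← C_add]
  congr 2
  rw [mul_add (2 * (j : K) + 1), mul_sum]
  congr 1
  · ring
  · exact sum_congr rfl fun k _ => by ring

end LegendreSeries

lemma H_succ (m : ℕ) : H (m + 1) = H m + 1 / ((m : ℝ) + 1) := by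
  rw [H, sum_Icc_succ_top (by omega), ← H]
  push_cast
  rfl

lemma H_succ_div_two (m : ℕ) :
    H ((m + 1) / 2) = H (m / 2) + (1 - (-1) ^ m) / ((m : ℝ) + 1) := by
  rcases Nat.even_or_odd' m with ⟨a, rfl | rfl⟩
  · rw [show (2 * a + 1) / 2 = 2 * a / 2 by omega, Even.neg_one_pow ⟨a, by ring⟩]
    ring
  · rw [show (2 * a + 1 + 1) / 2 = 2 * a / 2 + 1 by omega,
      show (2 * a + 1) / 2 = 2 * a / 2 by omega, H_succ, Odd.neg_one_pow ⟨a, rfl⟩,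
      Nat.mul_div_cancel_left a two_pos]
    push_cast
    field_simp
    ring

noncomputable def harmonicCombination (n j : ℕ) : ℝ :=
  H (n + j) - H (n - j) - H ((n + j) / 2) + H ((n - j) / 2)

lemma harmonicCombination_self (n : ℕ) : harmonicCombination n n = H (2 * n) - H n := by
  rw [harmonicCombination, ← two_mul, Nat.sub_self, Nat.mul_div_cancel_left n two_pos]
  ring

lemma harmonicCombination_eq_succ_add {n j : ℕ} (hj : j < n) :
    harmonicCombination n j = harmonicCombination n (j + 1) +
      (-1) ^ (n + j) * (2 * j + 1) / ((n - j) * (n + j + 1)) := by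
  obtain ⟨e, rfl⟩ : ∃ e, n = j + e + 1 := ⟨n - j - 1, by omega⟩
  have hsign : (-1 : ℝ) ^ e = -(-1) ^ (j + e + 1 + j) := by
    rw [show j + e + 1 + j = e + 2 * j + 1 by ring, pow_succ, pow_add, pow_mul]
    simp
  rw [harmonicCombination, harmonicCombination,
    show j + e + 1 + (j + 1) = j + e + 1 + j + 1 by ring, show j + e + 1 - j = e + 1 by omega,
    show j + e + 1 - (j + 1) = e by omega, H_succ, H_succ,
    H_succ_div_two, H_succ_div_two, hsign]
  push_cast
  rw [show (j : ℝ) + e + 1 - j = e + 1 by ring]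
  field_simp
  ring

-- The top coefficient `k = n` is split off: the general formula would divide by `n - k = 0`.
noncomputable def bCoeff (n k : ℕ) : ℝ :=
  if k < n then (2 * k + 1) / ((n - k) * (n + k + 1)) else H (2 * n) - H n

lemma harmonicCombination_eq_sum {n j : ℕ} (hj : j ≤ n) :
    harmonicCombination n j = ∑ k ∈ Ico j (n + 1), (-1) ^ (n + k) * bCoeff n k := by
  induction hj using Nat.decreasingInduction with
  | self =>
    rw [harmonicCombination_self, Nat.Ico_succ_singleton, sum_singleton, ← two_mul,
      Even.neg_one_pow ⟨n, two_mul n⟩, one_mul, bCoeff, if_neg (lt_irrefl n)]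
  | of_succ k hk ih =>
    rw [harmonicCombination_eq_succ_add hk, ih,
      sum_eq_sum_Ico_succ_bot (a := k) (b := n + 1) (by omega), show bCoeff n k = _ from if_pos hk,
      mul_div_assoc, add_comm]

noncomputable def cCoeff (n k : ℕ) : ℝ :=
  if k < n then c n k else cnn n

lemma neg_one_pow_add_mul_neg_one_pow_add (n j k : ℕ) :
    (-1 : ℝ) ^ (n + j) * (-1) ^ (n + k) = (-1) ^ (k + j) := by
  rw [← pow_add, show n + j + (n + k) = 2 * n + (k + j) by ring, pow_add, pow_mul, neg_one_sq,
    one_pow, one_mul]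

lemma sum_Ioo_neg_one_pow_mul_bCoeff {n j : ℕ} (hj : j ≤ n) :
    ∑ k ∈ Ioo j (n + 1), (-1) ^ (k + j) * bCoeff n k =
      (-1) ^ (n + j) * harmonicCombination n j - bCoeff n j := by
  rw [harmonicCombination_eq_sum hj, sum_eq_sum_Ico_succ_bot (by omega), mul_add, ← mul_assoc,
    ← pow_add, Even.neg_one_pow ⟨n + j, rfl⟩, one_mul, add_sub_cancel_left, mul_sum,
    Ico_add_one_left_eq_Ioo]
  exact sum_congr rfl fun k _ => by rw [← mul_assoc, neg_one_pow_add_mul_neg_one_pow_add]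

lemma sub_mul_cCoeff_eq {n j : ℕ} (hj : j ≤ n) :
    ((n : ℝ) * (n + 1) - j * (j + 1)) * cCoeff n j =
      (2 * j + 1) *
          (4 * bCoeff n j + 2 * ∑ k ∈ Ioo j (n + 1), (-1) ^ (k + j) * (4 * bCoeff n k)) -
        2 * (2 * n + 1) * (2 * ((-1) ^ (n + j) * bCoeff n j)) := by
  simp only [mul_left_comm _ (4 : ℝ), ← mul_sum, sum_Ioo_neg_one_pow_mul_bCoeff hj]
  rcases hj.lt_or_eq with hj | rfl
  · have hnj : (n : ℝ) - j ≠ 0 := sub_ne_zero.mpr (by exact_mod_cast hj.ne')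
    rw [cCoeff, bCoeff, if_pos hj, if_pos hj, c, ← harmonicCombination]
    rcases neg_one_pow_eq_or ℝ (n + j) with hs | hs <;>
    · rw [hs]
      field_simp
      ring
  · rw [sub_self, zero_mul, ← two_mul, Even.neg_one_pow ⟨j, two_mul j⟩, one_mul,
      harmonicCombination_self, bCoeff, if_neg (lt_irrefl j)]
    ring

lemma C_eq_eval_legendreSeries (n : ℕ) :
    _root_.C n = fun z => (legendreSeries (cCoeff n) (n + 1)).eval z := by
  funext z
  rw [eval_legendreSeries, sum_range_succ, _root_.C, cCoeff, if_neg (lt_irrefl n)]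
  exact congrArg (· + _) (sum_congr rfl fun k hk => by rw [cCoeff, if_pos (mem_range.mp hk)])

lemma B_eq_eval_legendreSeries (n : ℕ) :
    B n = fun z => (legendreSeries (fun k => 4 * bCoeff n k) (n + 1)).eval z := by
  funext z
  rw [eval_legendreSeries, sum_range_succ, B, bCoeff, if_neg (lt_irrefl n), mul_sum, add_comm]
  exact congrArg (· + _) (sum_congr rfl fun k hk => by
    rw [bCoeff, if_pos (mem_range.mp hk), mul_assoc])

lemma R_eq_eval_legendreSeries (n : ℕ) :
    R n = fun z =>
      (legendreSeries (fun k => 2 * ((-1) ^ (n + k) * bCoeff n k)) (n + 1)).eval z := by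
  funext z
  rw [eval_legendreSeries, sum_range_succ, R, bCoeff, if_neg (lt_irrefl n), mul_sum, add_comm,
    ← two_mul, Even.neg_one_pow ⟨n, two_mul n⟩, one_mul]
  exact congrArg (· + _) (sum_congr rfl fun k hk => by
    rw [bCoeff, if_pos (mem_range.mp hk)]; ring)

/-- For every natural number `n` and all real `z`,
`d/dz[(1-z²) C_n'(z)] + n(n+1) C_n(z) = 2(z-1) B_n'(z) + B_n(z) - 2(2n+1) R_n(z)`. -/
theorem C_differential_identity (n : ℕ) (z : ℝ) :
    deriv (fun z => (1 - z ^ 2) * deriv (C n) z) z + (n : ℝ) * ((n : ℝ) + 1) * C n z =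
      2 * (z - 1) * deriv (B n) z + B n z - 2 * (2 * (n : ℝ) + 1) * R n z := by
  set Cn := legendreSeries (cCoeff n) (n + 1)
  set Bn := legendreSeries (fun k => 4 * bCoeff n k) (n + 1)
  set Rn := legendreSeries (fun k => 2 * ((-1) ^ (n + k) * bCoeff n k)) (n + 1)
  have hpoly : derivative ((1 - X ^ 2) * derivative Cn) + C ((n : ℝ) * (n + 1)) * Cn =
      2 * (X - 1) * derivative Bn + Bn - C (2 * (2 * (n : ℝ) + 1)) * Rn := by
    rw [derivative_one_sub_X_sq_mul_derivative_legendreSeries_add,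
      two_mul_X_sub_one_mul_derivative_legendreSeries_add,
      C_mul_legendreSeries, legendreSeries_sub]
    exact legendreSeries_congr fun j hj => sub_mul_cCoeff_eq (by omega)
  have hflux : (fun z => (1 - z ^ 2) * (derivative Cn).eval z) =
      fun z => ((1 - X ^ 2) * derivative Cn).eval z := by
    simp
  rw [C_eq_eval_legendreSeries, B_eq_eval_legendreSeries, R_eq_eval_legendreSeries]
  simp only [Polynomial.deriv]
  rw [hflux, Polynomial.deriv]
  simpa using congrArg (eval z) hpoly
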